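/- arXiv:2404.09080 — 2 statements merged into one kernel-verified Lean document; each statement's English description precedes it below -/
import Mathlib

section
/- Let L > 0, T > 0 and u⁻ < 0 < u⁺ be real numbers. Let α : ℝ → ℝ satisfy α(0) = 0, α(x) ≥ 0 for all x ≥ 0, and |α(x) - α(y)| ≤ L·|x - y| for all x, y ≥ 0 (α is L-Lipschitz on the nonnegative reals). Let u : ℝ → ℝ satisfy u(t) ∈ [u⁻, u⁺] for all t ∈ [0, T], and let μ : ℝ → ℝ be differentiable on [0, T] with μ(t) ≥ 0 and μ'(t) = α(μ(t))·u(t) for all t ∈ [0, T]. If μ(0) > 0, then for every t ∈ [0, T] one has μ(t) ≥ μ(0)·exp(L·u⁻·t), and in particular μ(t) > 0. -/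
open Set Real

/-- Grönwall's inequality in the lower direction: it is the usual one applied to `-f`. -/
theorem mul_exp_le_of_mul_le_deriv_right {f f' : ℝ → ℝ} {K a b : ℝ}
    (hf : ContinuousOn f (Icc a b)) (hf' : ∀ x ∈ Ico a b, HasDerivWithinAt f (f' x) (Ici x) x)
    (bound : ∀ x ∈ Ico a b, K * f x ≤ f' x) :
    ∀ x ∈ Icc a b, f a * exp (K * (x - a)) ≤ f x := by
  intro x hx
  have hneg := le_gronwallBound_of_liminf_deriv_right_le (f := fun y => -f y)
    (f' := fun y => -f' y) (δ := -f a) (K := K) (ε := 0) hf.neg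
    (fun y hy _ hr => (hf' y hy).neg.liminf_right_slope_le hr) le_rfl
    (fun y hy => by linarith [bound y hy]) x hx
  rw [gronwallBound_ε0] at hneg
  linarith

theorem le_mul_of_abs_sub_map_zero_le {α : ℝ → ℝ} {L x : ℝ} (hα0 : α 0 = 0)
    (hlip : |α x - α 0| ≤ L * |x - 0|) (hx : 0 ≤ x) : α x ≤ L * x := by
  rw [hα0, sub_zero, sub_zero, abs_of_nonneg hx] at hlip
  exact (le_abs_self _).trans hlip

theorem stmt_0_general (L T um up : ℝ) (hum : um < 0)
    (α u μ : ℝ → ℝ)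
    (hα0 : α 0 = 0)
    (hαnonneg : ∀ x, 0 ≤ x → 0 ≤ α x)
    (hαlip : ∀ x y, 0 ≤ x → 0 ≤ y → |α x - α y| ≤ L * |x - y|)
    (hu : ∀ t ∈ Set.Icc (0 : ℝ) T, u t ∈ Set.Icc um up)
    (hμpos : ∀ t ∈ Set.Icc (0 : ℝ) T, 0 ≤ μ t)
    (hμderiv : ∀ t ∈ Set.Icc (0 : ℝ) T, HasDerivAt μ (α (μ t) * u t) t)
    (h0 : 0 < μ 0) :
    ∀ t ∈ Set.Icc (0 : ℝ) T, μ 0 * Real.exp (L * um * t) ≤ μ t ∧ 0 < μ t := by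
  have hgrowth : ∀ s ∈ Icc 0 T, L * um * μ s ≤ α (μ s) * u s := fun s hs => by
    have hμs := hμpos s hs
    calc L * um * μ s = L * μ s * um := by ring
      _ ≤ α (μ s) * um :=
        mul_le_mul_of_nonpos_right
          (le_mul_of_abs_sub_map_zero_le hα0 (hαlip _ 0 hμs le_rfl) hμs) hum.le
      _ ≤ α (μ s) * u s := mul_le_mul_of_nonneg_left (hu s hs).1 (hαnonneg _ hμs)
  intro t ht
  have hlower := mul_exp_le_of_mul_le_deriv_right
    (fun s hs => (hμderiv s hs).continuousAt.continuousWithinAt)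
    (fun s hs => (hμderiv s (Ico_subset_Icc_self hs)).hasDerivWithinAt)
    (fun s hs => hgrowth s (Ico_subset_Icc_self hs)) t ht
  rw [sub_zero] at hlower
  exact ⟨hlower, (by positivity : 0 < μ 0 * exp (L * um * t)).trans_le hlower⟩

theorem stmt_0 (L T um up : ℝ) (hL : 0 < L) (hT : 0 < T) (hum : um < 0) (hup : 0 < up)
    (α u μ : ℝ → ℝ)
    (hα0 : α 0 = 0)
    (hαnonneg : ∀ x, 0 ≤ x → 0 ≤ α x)
    (hαlip : ∀ x y, 0 ≤ x → 0 ≤ y → |α x - α y| ≤ L * |x - y|)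
    (hu : ∀ t ∈ Set.Icc (0 : ℝ) T, u t ∈ Set.Icc um up)
    (hμpos : ∀ t ∈ Set.Icc (0 : ℝ) T, 0 ≤ μ t)
    (hμderiv : ∀ t ∈ Set.Icc (0 : ℝ) T, HasDerivAt μ (α (μ t) * u t) t)
    (h0 : 0 < μ 0) :
    ∀ t ∈ Set.Icc (0 : ℝ) T, μ 0 * Real.exp (L * um * t) ≤ μ t ∧ 0 < μ t :=
  stmt_0_general L T um up hum α u μ hα0 hαnonneg hαlip hu hμpos hμderiv h0
end

section
/- Let J be a real K × N matrix and let Y be a real N × K matrix satisfying the Moore–Penrose equations for J: J·Y·J = J, Y·J·Y = Y, (J·Y)ᵀ = J·Y, and (Y·J)ᵀ = Y·J. Let B be a real N × U matrix with J·B = 0, let ψ, c ∈ ℝ^K with J·(Y·ψ) = ψ, let λ > 0, and let v ∈ ℝ^U be arbitrary. Then cᵀ·( ψ + J·( −Y·ψ − λ·(Y·c) + B·v ) ) = −λ · cᵀ·(J·Y)·c, and this quantity is ≤ 0. -/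
open Matrix

theorem stmt_8 (K N U : ℕ) (J : Matrix (Fin K) (Fin N) ℝ) (Y : Matrix (Fin N) (Fin K) ℝ)
    (h1 : J * Y * J = J) (h2 : Y * J * Y = Y)
    (h3 : (J * Y)ᵀ = J * Y) (h4 : (Y * J)ᵀ = Y * J)
    (B : Matrix (Fin N) (Fin U) ℝ) (hB : J * B = 0)
    (ψ c : Fin K → ℝ) (hψ : J *ᵥ (Y *ᵥ ψ) = ψ)
    (l : ℝ) (hl : 0 < l) (v : Fin U → ℝ) :
    c ⬝ᵥ (ψ + J *ᵥ (-(Y *ᵥ ψ) - l • (Y *ᵥ c) + B *ᵥ v)) = -l * (c ⬝ᵥ ((J * Y) *ᵥ c)) ∧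
    c ⬝ᵥ (ψ + J *ᵥ (-(Y *ᵥ ψ) - l • (Y *ᵥ c) + B *ᵥ v)) ≤ 0 := by
  have hBv : J *ᵥ (B *ᵥ v) = 0 := by
    rw [mulVec_mulVec, hB, zero_mulVec]
  have key : ψ + J *ᵥ (-(Y *ᵥ ψ) - l • (Y *ᵥ c) + B *ᵥ v)
      = -(l • ((J * Y) *ᵥ c)) := by
    rw [mulVec_add, mulVec_sub, mulVec_neg, hψ, hBv, mulVec_smul, mulVec_mulVec]
    module
  have heq : c ⬝ᵥ (ψ + J *ᵥ (-(Y *ᵥ ψ) - l • (Y *ᵥ c) + B *ᵥ v))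
      = -l * (c ⬝ᵥ ((J * Y) *ᵥ c)) := by
    rw [key, dotProduct_neg, dotProduct_smul, smul_eq_mul, neg_mul]
  refine ⟨heq, heq ▸ ?_⟩
  have hidem : (J * Y) * (J * Y) = J * Y := by
    rw [← Matrix.mul_assoc, h1]
  have hnn : 0 ≤ c ⬝ᵥ ((J * Y) *ᵥ c) := by
    have : c ⬝ᵥ ((J * Y) *ᵥ c) = ((J * Y) *ᵥ c) ⬝ᵥ ((J * Y) *ᵥ c) := by
      conv_lhs => rw [← hidem, ← mulVec_mulVec, ← h3, dotProduct_mulVec,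
        vecMul_transpose, h3]
    rw [this, dotProduct]
    exact Finset.sum_nonneg fun i _ => mul_self_nonneg _
  nlinarith
end
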